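/- Let G be a compact Hausdorff topological group with Haar probability measure μ, let E : C(G,ℂ) → C(G,ℂ) be the conjugation-averaging map E(f)(x) = ∫_G f(g⁻¹ x g) dμ(g), and let φ be a state on C(G,ℂ) (a positive unital continuous linear functional). Then the following are equivalent: (i) φ(x ↦ f(x g)) = φ(x ↦ f(g x)) for all f ∈ C(G,ℂ) and all g ∈ G; (ii) φ(x ↦ f(g x g⁻¹)) = φ(f) for all f ∈ C(G,ℂ) and all g ∈ G; (iii) φ = φ ∘ E. -/

import Mathlib

/-!
Statement 11 (classical instance of Lemma 4.1): for a state φ on C(G,ℂ), G a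
compact Hausdorff group, the following are equivalent: (i) φ(f(·g)) = φ(f(g·))
for all f, g; (ii) φ is conjugation-invariant; (iii) φ factors through the
conjugation-averaging conditional expectation E.
-/

open scoped ComplexOrder
open MeasureTheory

noncomputable section

variable {G : Type} [Group G] [TopologicalSpace G] [IsTopologicalGroup G]

/-- Right translate: `x ↦ f(x·g)`. -/
def rightTranslate (g : G) (f : C(G, ℂ)) : C(G, ℂ) :=
  ⟨fun x => f (x * g), f.continuous.comp (continuous_mul_right g)⟩

/-- Left translate: `x ↦ f(g·x)`. -/
def leftTranslate (g : G) (f : C(G, ℂ)) : C(G, ℂ) :=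
  ⟨fun x => f (g * x), f.continuous.comp (continuous_mul_left g)⟩

/-- Conjugation translate: `x ↦ f(g·x·g⁻¹)`. -/
def conjTranslate (g : G) (f : C(G, ℂ)) : C(G, ℂ) :=
  ⟨fun x => f (g * x * g⁻¹),
    f.continuous.comp ((continuous_mul_right g⁻¹).comp (continuous_mul_left g))⟩

/-- for a state `φ` on `C(G,ℂ)` and the conjugation-averaging
conditional expectation `E(f)(x) = ∫ f(g⁻¹xg) dμ(g)` with respect to the Haar
probability measure `μ`, centrality of `φ` (condition (i)), conjugation-invariance
of `φ` (condition (ii)) and `φ = φ ∘ E` (condition (iii)) are all equivalent. -/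
theorem central_state_characterisation
    {G : Type} [Group G] [TopologicalSpace G] [IsTopologicalGroup G] [CompactSpace G]
    [T2Space G] [MeasurableSpace G] [BorelSpace G]
    (μ : Measure G) [IsProbabilityMeasure μ]
    [μ.IsMulLeftInvariant] [μ.IsMulRightInvariant]
    (E : C(G, ℂ) → C(G, ℂ))
    (hE : ∀ (f : C(G, ℂ)) (x : G), E f x = ∫ g, f (g⁻¹ * x * g) ∂μ)
    (φ : C(G, ℂ) →L[ℂ] ℂ) (hφ1 : φ 1 = 1)
    (hφpos : ∀ f : C(G, ℂ), 0 ≤ φ (star f * f)) :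
    ((∀ (f : C(G, ℂ)) (g : G), φ (rightTranslate g f) = φ (leftTranslate g f)) ↔
      (∀ (f : C(G, ℂ)) (g : G), φ (conjTranslate g f) = φ f)) ∧
    ((∀ (f : C(G, ℂ)) (g : G), φ (conjTranslate g f) = φ f) ↔
      (∀ f : C(G, ℂ), φ (E f) = φ f)) := by
  constructor
  · constructor
    · intro h f g
      have h1 := h (leftTranslate g f) g⁻¹
      have e1 : rightTranslate g⁻¹ (leftTranslate g f) = conjTranslate g f := by
        ext x; simp [rightTranslate, leftTranslate, conjTranslate, mul_assoc]
      have e2 : leftTranslate g⁻¹ (leftTranslate g f) = f := by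
        ext x; simp [leftTranslate, ← mul_assoc]
      rw [e1, e2] at h1; exact h1
    · intro h f g
      have key : conjTranslate g (rightTranslate g f) = leftTranslate g f := by
        ext x; simp [rightTranslate, leftTranslate, conjTranslate, mul_assoc]
      rw [← h (rightTranslate g f) g, key]
  · constructor
    · intro h f
      -- express E f as a Bochner integral in C(G, ℂ)
      set H : C(G × G, ℂ) :=
        ⟨fun p => f (p.1⁻¹ * p.2 * p.1),
          f.continuous.comp (by fun_prop)⟩ with hH
      set F : C(G, C(G, ℂ)) := H.curry with hF
      have hFint : Integrable (fun g => F g) μ :=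
        F.continuous.integrable_of_hasCompactSupport
          (HasCompactSupport.of_compactSpace _)
      have hEf : E f = ∫ g, F g ∂μ := by
        ext x
        rw [hE, ContinuousMap.integral_apply hFint]
        rfl
      have hconj : ∀ g : G, φ (F g) = φ f := by
        intro g
        have : F g = conjTranslate g⁻¹ f := by
          ext x; simp [hF, hH, ContinuousMap.curry, conjTranslate]
        rw [this, h]
      rw [hEf, ← ContinuousLinearMap.integral_comp_comm φ hFint]
      simp only [hconj]
      simp
    · intro h f g
      have hint : ∀ x : G, Integrable (fun h : G => f (h⁻¹ * x * h)) μ := by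
        intro x
        exact (f.continuous.comp (by fun_prop)).integrable_of_hasCompactSupport
          (HasCompactSupport.of_compactSpace _)
      have hEconj : E (conjTranslate g f) = E f := by
        ext x
        rw [hE, hE]
        have := integral_mul_right_eq_self (μ := μ) (fun h : G => f (h⁻¹ * x * h)) g⁻¹
        rw [← this]
        congr 1
        ext h
        simp [conjTranslate, mul_assoc]
      calc φ (conjTranslate g f) = φ (E (conjTranslate g f)) := (h _).symm
        _ = φ (E f) := by rw [hEconj]
        _ = φ f := h f

end
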